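/- arXiv:1610.07946 — 3 statements merged into one kernel-verified Lean document; each statement's English description precedes it below -/
import Mathlib

section
/- For two nontrivial absolute values φ₁, φ₂ on a field, if φ₁(x) < 1 implies φ₂(x) < 1 for all x, then φ₂ is a positive power of φ₁. -/
open Real

/-- Key comparison lemma: if `φ₁ x ^ n < φ₁ x₀ ^ m` then `φ₂ x ^ n < φ₂ x₀ ^ m`. -/
lemma aux_lt {F : Type*} [Field F] (φ₁ φ₂ : AbsoluteValue F ℝ)
    (h : ∀ x : F, φ₁ x < 1 → φ₂ x < 1) (x x₀ : F) (hx : x ≠ 0) (hx₀ : x₀ ≠ 0)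
    (n : ℕ) (m : ℤ) (hlt : φ₁ x ^ (n : ℤ) < φ₁ x₀ ^ m) :
    φ₂ x ^ (n : ℤ) < φ₂ x₀ ^ m := by
  have p1x : 0 < φ₁ x := φ₁.pos hx
  have p1x₀ : 0 < φ₁ x₀ := φ₁.pos hx₀
  have p2x₀ : 0 < φ₂ x₀ := φ₂.pos hx₀
  have key : φ₁ (x ^ (n : ℤ) / x₀ ^ m) < 1 := by
    rw [map_div₀, map_zpow₀, map_zpow₀, div_lt_one (zpow_pos p1x₀ m)]
    exact hlt
  have := h _ key
  rw [map_div₀, map_zpow₀, map_zpow₀, div_lt_one (zpow_pos p2x₀ m)] at this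
  exact this

theorem stmt_9 {F : Type*} [Field F] (φ₁ φ₂ : AbsoluteValue F ℝ)
    (h₁ : ∃ x : F, x ≠ 0 ∧ φ₁ x ≠ 1) (h₂ : ∃ x : F, x ≠ 0 ∧ φ₂ x ≠ 1)
    (h : ∀ x : F, φ₁ x < 1 → φ₂ x < 1) :
    ∃ α : ℝ, 0 < α ∧ ∀ x : F, φ₂ x = φ₁ x ^ α := by
  -- Find x₀ with φ₁ x₀ > 1
  obtain ⟨y, hy0, hy1⟩ := h₁
  obtain ⟨x₀, hx₀0, hx₀⟩ : ∃ x₀ : F, x₀ ≠ 0 ∧ 1 < φ₁ x₀ := by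
    rcases lt_or_gt_of_ne hy1 with hlt | hgt
    · refine ⟨y⁻¹, inv_ne_zero hy0, ?_⟩
      rw [map_inv₀]
      exact (one_lt_inv₀ (φ₁.pos hy0)).mpr hlt
    · exact ⟨y, hy0, hgt⟩
  have p1x₀ : 0 < φ₁ x₀ := φ₁.pos hx₀0
  have p2x₀pos : 0 < φ₂ x₀ := φ₂.pos hx₀0
  -- φ₂ x₀ > 1
  have hx₀2 : 1 < φ₂ x₀ := by
    by_contra hcon
    push_neg at hcon
    have : φ₁ x₀⁻¹ < 1 := by
      rw [map_inv₀]; exact inv_lt_one_of_one_lt₀ hx₀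
    have h2 := h _ this
    rw [map_inv₀, inv_lt_one_iff₀] at h2
    rcases h2 with h2 | h2
    · exact absurd h2 (not_le.mpr p2x₀pos)
    · exact absurd h2 (not_lt.mpr hcon)
  set b := Real.log (φ₁ x₀) with hb
  set d := Real.log (φ₂ x₀) with hd
  have bpos : 0 < b := Real.log_pos hx₀
  have dpos : 0 < d := Real.log_pos hx₀2
  refine ⟨d / b, div_pos dpos bpos, fun x => ?_⟩
  rcases eq_or_ne x 0 with rfl | hx
  · rw [map_zero, map_zero, Real.zero_rpow (ne_of_gt (div_pos dpos bpos))]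
  have p1x : 0 < φ₁ x := φ₁.pos hx
  have p2x : 0 < φ₂ x := φ₂.pos hx
  set a := Real.log (φ₁ x) with ha
  set c := Real.log (φ₂ x) with hc
  -- key claims
  have claim1 : ∀ q : ℚ, a < q * b → c ≤ q * d := by
    intro q hq
    have hn : (0 : ℝ) < (q.den : ℝ) := by positivity
    have h1 : (q.den : ℝ) * a < (q.num : ℝ) * b := by
      have : (q : ℝ) = (q.num : ℝ) / (q.den : ℝ) := by
        rw [Rat.cast_def]
      rw [this, div_mul_eq_mul_div, lt_div_iff₀ hn] at hq
      linarith [hq]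
    have hlog : Real.log (φ₁ x ^ (q.den : ℤ)) < Real.log (φ₁ x₀ ^ q.num) := by
      rw [Real.log_zpow, Real.log_zpow]
      push_cast
      linarith
    have hlt : φ₁ x ^ (q.den : ℤ) < φ₁ x₀ ^ q.num := by
      rwa [Real.log_lt_log_iff (zpow_pos p1x _) (zpow_pos p1x₀ _)] at hlog
    have h2 := aux_lt φ₁ φ₂ h x x₀ hx hx₀0 q.den q.num hlt
    have hlog2 : Real.log (φ₂ x ^ (q.den : ℤ)) < Real.log (φ₂ x₀ ^ q.num) :=
      Real.log_lt_log (zpow_pos p2x _) h2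
    rw [Real.log_zpow, Real.log_zpow] at hlog2
    have : (q.den : ℝ) * c < (q.num : ℝ) * d := by push_cast at hlog2 ⊢; linarith
    have hq' : (q : ℝ) = (q.num : ℝ) / (q.den : ℝ) := by rw [Rat.cast_def]
    rw [hq', div_mul_eq_mul_div, le_div_iff₀ hn]
    nlinarith
  have claim2 : ∀ q : ℚ, (q : ℝ) * b < a → (q : ℝ) * d ≤ c := by
    intro q hq
    have hn : (0 : ℝ) < (q.den : ℝ) := by positivity
    have h1 : (q.num : ℝ) * b < (q.den : ℝ) * a := by
      have hq' : (q : ℝ) = (q.num : ℝ) / (q.den : ℝ) := by rw [Rat.cast_def]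
      rw [hq', div_mul_eq_mul_div, div_lt_iff₀ hn] at hq
      linarith
    have hlog : Real.log (φ₁ x₀ ^ q.num) < Real.log (φ₁ x ^ (q.den : ℤ)) := by
      rw [Real.log_zpow, Real.log_zpow]
      push_cast
      linarith
    have hlt : φ₁ x₀ ^ q.num < φ₁ x ^ ((q.den : ℕ) : ℤ) := by
      rwa [Real.log_lt_log_iff (zpow_pos p1x₀ _) (zpow_pos p1x _)] at hlog
    -- φ₁ (x₀ ^ m / x ^ n) < 1
    have hlt' : φ₁ (x₀ ^ q.num) ^ (1 : ℤ) < φ₁ (x ^ ((q.den : ℕ) : ℤ)) ^ (1 : ℤ) := by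
      simpa [map_zpow₀] using hlt
    have h2 : φ₂ x₀ ^ q.num < φ₂ x ^ ((q.den : ℕ) : ℤ) := by
      have hxz : x ^ ((q.den : ℕ) : ℤ) ≠ 0 := zpow_ne_zero _ hx
      have := aux_lt φ₁ φ₂ h (x₀ ^ q.num) (x ^ ((q.den : ℕ) : ℤ)) (zpow_ne_zero _ hx₀0) hxz
        1 1 (by simpa [map_zpow₀] using hlt)
      simpa [map_zpow₀] using this
    have hlog2 : Real.log (φ₂ x₀ ^ q.num) < Real.log (φ₂ x ^ ((q.den : ℕ) : ℤ)) :=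
      Real.log_lt_log (zpow_pos p2x₀pos _) h2
    rw [Real.log_zpow, Real.log_zpow] at hlog2
    have : (q.num : ℝ) * d < (q.den : ℝ) * c := by push_cast at hlog2 ⊢; linarith
    have hq' : (q : ℝ) = (q.num : ℝ) / (q.den : ℝ) := by rw [Rat.cast_def]
    rw [hq', div_mul_eq_mul_div, div_le_iff₀ hn]
    nlinarith
  -- conclude c / d = a / b
  have heq : c * b = a * d := by
    by_contra hne
    rcases lt_or_gt_of_ne hne with hlt | hgt
    · -- c/d < a/b : pick q with c/d < q < a/b
      obtain ⟨q, hq1, hq2⟩ := exists_rat_btwn (show c / d < a / b by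
        rw [div_lt_div_iff₀ dpos bpos]; linarith)
      have hqb : (q : ℝ) * b < a := by
        rw [lt_div_iff₀ bpos] at hq2; linarith
      have := claim2 q hqb
      rw [div_lt_iff₀ dpos] at hq1
      linarith
    · obtain ⟨q, hq1, hq2⟩ := exists_rat_btwn (show a / b < c / d by
        rw [div_lt_div_iff₀ bpos dpos]; linarith)
      have hqa : a < (q : ℝ) * b := by
        rw [div_lt_iff₀ bpos] at hq1; linarith
      have := claim1 q hqa
      rw [lt_div_iff₀ dpos] at hq2
      linarith
  -- finish: φ₂ x = φ₁ x ^ (d / b)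
  have : c = a * (d / b) := by
    field_simp
    linarith [heq]
  rw [Real.rpow_def_of_pos p1x, ← ha, ← this, hc, Real.exp_log p2x]
end

section
/- Every nonarchimedean exponential valuation on a number field is a positive real multiple of the p-adic valuation attached to a unique nonzero prime ideal of the ring of integers. -/
open NumberField IsDedekindDomain Multiplicative

/-! The ultrametric inequality gives `v ≥ 0` on `ℤ`; since the valuation ring of `v` is
integrally closed, `v ≥ 0` on `𝓞 k`. Hence `𝔭 = {a ∈ 𝓞 k | 0 < v a}` is a prime ideal, nonzero
because `v` is nontrivial, and `v` vanishes off `𝔭`. Every `x` with `v_𝔭 x ≥ 0` is `n / d` with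
`d ∉ 𝔭`, so `v x ≥ 0`; thus `v` only depends on `v_𝔭`, and `v = v(π) · v_𝔭` for a uniformizer `π`.
Any other prime `𝔮` with this property contains `𝔭`, which is maximal. -/

namespace AddValuation

theorem nonneg_of_isIntegral_int {R Γ₀ : Type*} [CommRing R]
    [LinearOrderedAddCommGroupWithTop Γ₀] (w : AddValuation R Γ₀) {x : R}
    (hx : IsIntegral ℤ x) : 0 ≤ w x := by
  have := (Valuation.integer.integers w.toValuation).mem_of_integral hx.tower_top
  rw [Valuation.mem_integer_iff, toValuation_apply, ← ofAdd_zero, ofAdd_le] at this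
  exact OrderDual.toDual_le_toDual.mp this

section Center

variable {R K Γ₀ : Type*} [CommRing R] [Field K] [Algebra R K]
  [LinearOrderedAddCommGroupWithTop Γ₀] (w : AddValuation K Γ₀)

def centerIdeal (hR : ∀ r : R, 0 ≤ w (algebraMap R K r)) : Ideal R where
  carrier := {r | 0 < w (algebraMap R K r)}
  add_mem' {a b} ha hb := by simpa using w.map_lt_add ha hb
  zero_mem' := by simp
  smul_mem' c r hr := by
    simpa [w.map_mul] using hr.trans_le (le_add_of_nonneg_left (hR c))

variable {w} {hR : ∀ r : R, 0 ≤ w (algebraMap R K r)}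

@[simp]
theorem mem_centerIdeal {r : R} : r ∈ w.centerIdeal hR ↔ 0 < w (algebraMap R K r) := Iff.rfl

theorem eq_zero_of_notMem_centerIdeal {r : R} (hr : r ∉ w.centerIdeal hR) :
    w (algebraMap R K r) = 0 :=
  (hR r).antisymm' (not_lt.mp hr)

theorem centerIdeal_isPrime : (w.centerIdeal hR).IsPrime := by
  refine Ideal.isPrime_iff.mpr ⟨?_, fun {a b} hab => ?_⟩
  · simp [Ideal.eq_top_iff_one]
  · by_contra! h
    simp [w.map_mul, eq_zero_of_notMem_centerIdeal h.1, eq_zero_of_notMem_centerIdeal h.2] at hab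

theorem centerIdeal_ne_bot [IsDomain R] [IsFractionRing R K]
    (hw : ∃ x : K, x ≠ 0 ∧ w x ≠ 0) : w.centerIdeal hR ≠ ⊥ := by
  obtain ⟨x, hx, hwx⟩ := hw
  intro hbot
  have h0 : ∀ r : R, r ≠ 0 → w (algebraMap R K r) = 0 := fun r hr =>
    eq_zero_of_notMem_centerIdeal (hR := hR) (by simpa [hbot] using hr)
  obtain ⟨a, b, hb, rfl⟩ := IsFractionRing.div_surjective (A := R) x
  have ha : a ≠ 0 := by rintro rfl; simp at hx
  simp [w.map_div, h0 a ha, h0 b (nonZeroDivisors.ne_zero hb)] at hwx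

def center [IsDomain R] [IsFractionRing R K] (hR : ∀ r : R, 0 ≤ w (algebraMap R K r))
    (hw : ∃ x : K, x ≠ 0 ∧ w x ≠ 0) : HeightOneSpectrum R :=
  ⟨w.centerIdeal hR, centerIdeal_isPrime, centerIdeal_ne_bot hw⟩

end Center

section Dedekind

variable {R K Γ₀ : Type*} [CommRing R] [IsDedekindDomain R] [Field K] [Algebra R K]
  [IsFractionRing R K] [LinearOrderedAddCommGroupWithTop Γ₀] {w : AddValuation K Γ₀}
  {hR : ∀ r : R, 0 ≤ w (algebraMap R K r)} {hw : ∃ x : K, x ≠ 0 ∧ w x ≠ 0}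

theorem nonneg_of_valuation_center_le_one {x : K} (hx : (w.center hR hw).valuation K x ≤ 1) :
    0 ≤ w x := by
  obtain ⟨n, d, hnd⟩ := (w.center hR hw).exists_primeCompl_mul_eq_of_integer x hx
  have hd : w (algebraMap R K d) = 0 := eq_zero_of_notMem_centerIdeal (hR := hR) d.2
  simpa [← hnd, w.map_mul, hd] using hR n

theorem le_of_valuation_center_le {x y : K} (hy : y ≠ 0)
    (hxy : (w.center hR hw).valuation K x ≤ (w.center hR hw).valuation K y) : w y ≤ w x := by
  have hdiv : 0 ≤ w (x / y) := nonneg_of_valuation_center_le_one <| by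
    rwa [Valuation.map_div, div_le_one₀ (Valuation.pos_iff _ |>.mpr hy)]
  calc w y ≤ w (x / y) + w y := le_add_of_nonneg_left hdiv
    _ = w x := by rw [← w.map_mul, div_mul_cancel₀ x hy]

theorem eq_of_valuation_center_eq {x y : K} (hx : x ≠ 0) (hy : y ≠ 0)
    (hxy : (w.center hR hw).valuation K x = (w.center hR hw).valuation K y) : w x = w y :=
  (le_of_valuation_center_le hx hxy.ge).antisymm (le_of_valuation_center_le hy hxy.le)

theorem center_eq_of_forall_valuation_eq_one {𝔮 : HeightOneSpectrum R}
    (h : ∀ x : K, x ≠ 0 → 𝔮.valuation K x = 1 → w x = 0) : w.center hR hw = 𝔮 := by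
  refine HeightOneSpectrum.ext ((w.center hR hw).isMaximal.eq_of_le 𝔮.isPrime.ne_top ?_)
  intro r hr
  by_contra hr𝔮
  have hr0 : r ≠ 0 := by rintro rfl; exact hr𝔮 (zero_mem _)
  have := h _ (by simpa using hr0) ((𝔮.valuation_eq_one_iff_notMem).mpr hr𝔮)
  exact (mem_centerIdeal (hR := hR) |>.mp hr).ne' this

theorem exists_valuation_center_eq_exp_neg_one_and_pos :
    ∃ π : K, π ≠ 0 ∧ (w.center hR hw).valuation K π = WithZero.exp (-1) ∧ 0 < w π := by
  obtain ⟨π, hπ⟩ := (w.center hR hw).intValuation_exists_uniformizer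
  have hπ0 : π ≠ 0 := by
    rintro rfl
    exact WithZero.exp_ne_zero (hπ.symm.trans (Valuation.map_zero _))
  have hπmem : π ∈ w.centerIdeal hR :=
    ((w.center hR hw).intValuation_lt_one_iff_mem π).mp (by rw [hπ]; decide)
  refine ⟨algebraMap R K π, by simpa using hπ0, ?_, hπmem⟩
  rwa [HeightOneSpectrum.valuation_of_algebraMap]

end Dedekind

section Real

variable {R K : Type*} [CommRing R] [IsDedekindDomain R] [Field K] [Algebra R K]
  [IsFractionRing R K] {w : AddValuation K (WithTop ℝ)}
  {hR : ∀ r : R, 0 ≤ w (algebraMap R K r)} {hw : ∃ x : K, x ≠ 0 ∧ w x ≠ 0}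

theorem exists_pos_eq_mul_of_valuation_center_eq_exp : ∃ s : ℝ, 0 < s ∧ ∀ (x : K) (m : ℤ),
    x ≠ 0 → (w.center hR hw).valuation K x = WithZero.exp (-m) →
      w x = ((s * m : ℝ) : WithTop ℝ) := by
  obtain ⟨π, hπ0, hπ, hπpos⟩ :=
    exists_valuation_center_eq_exp_neg_one_and_pos (hR := hR) (hw := hw)
  obtain ⟨s, hs⟩ := WithTop.ne_top_iff_exists.mp (w.ne_top_iff.mpr hπ0)
  refine ⟨s, by exact_mod_cast hs ▸ hπpos, fun x m hx hxm => ?_⟩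
  obtain ⟨r, hr⟩ := WithTop.ne_top_iff_exists.mp (w.ne_top_iff.mpr hx)
  -- `m = a - b` with `a b : ℕ`, and `x * π ^ b`, `π ^ a` have the same `𝔭`-adic valuation
  have key : w (x * π ^ (-m).toNat) = w (π ^ m.toNat) := by
    refine eq_of_valuation_center_eq (hR := hR) (hw := hw) (by simp [hx, hπ0]) (by simp [hπ0]) ?_
    simp only [Valuation.map_mul, Valuation.map_pow, hxm, hπ, ← WithZero.exp_nsmul,
      ← WithZero.exp_add, WithZero.exp_inj, nsmul_eq_mul, mul_neg, mul_one]
    omega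
  rw [w.map_mul, w.map_pow, w.map_pow, ← hr, ← hs, ← WithTop.coe_nsmul, ← WithTop.coe_nsmul,
    ← WithTop.coe_add, WithTop.coe_eq_coe, nsmul_eq_mul, nsmul_eq_mul] at key
  have hm : (m : ℝ) = m.toNat - (-m).toNat := mod_cast (Int.toNat_sub_toNat_neg m).symm
  rw [← hr, hm, WithTop.coe_eq_coe]
  linarith

end Real

end AddValuation

theorem stmt_12_general (k : Type*) [Field k] [NumberField k]
    (v : k → WithTop ℝ)
    (h0 : ∀ x : k, v x = ⊤ ↔ x = 0)
    (hmul : ∀ x y : k, v (x * y) = v x + v y)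
    (hadd : ∀ x y : k, min (v x) (v y) ≤ v (x + y))
    (hnontriv : ∃ x : k, x ≠ 0 ∧ v x ≠ 0) :
    ∃! 𝔭 : HeightOneSpectrum (𝓞 k), ∃ s : ℝ, 0 < s ∧
      ∀ (x : k) (m : ℤ), x ≠ 0 →
        𝔭.valuation k x = ((Multiplicative.ofAdd (-m) : Multiplicative ℤ) : WithZero (Multiplicative ℤ)) →
        v x = ((s * m : ℝ) : WithTop ℝ) := by
  have hv1 : v 1 = 0 :=
    WithTop.add_left_cancel (mt (h0 1).mp one_ne_zero) (by rw [← hmul, one_mul, add_zero])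
  let w : AddValuation k (WithTop ℝ) := .of v ((h0 0).mpr rfl) hv1 hadd hmul
  have hR (r : 𝓞 k) : 0 ≤ w (algebraMap (𝓞 k) k r) :=
    w.nonneg_of_isIntegral_int (RingOfIntegers.isIntegral_coe r)
  refine ⟨w.center hR hnontriv, AddValuation.exists_pos_eq_mul_of_valuation_center_eq_exp,
    fun 𝔮 ⟨s, _, hs⟩ => ?_⟩
  refine (AddValuation.center_eq_of_forall_valuation_eq_one fun x hx hx1 => ?_).symm
  simpa [w] using hs x 0 hx (by simpa using hx1)

/-- Every nontrivial nonarchimedean exponential valuation on a number field is a positive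
multiple of the `𝔭`-adic exponential valuation for a unique nonzero prime ideal `𝔭`. -/
theorem stmt_12 (k : Type*) [Field k] [NumberField k]
    (v : k → WithTop ℝ)
    (h0 : ∀ x : k, v x = ⊤ ↔ x = 0)
    (hmul : ∀ x y : k, v (x * y) = v x + v y)
    (hadd : ∀ x y : k, min (v x) (v y) ≤ v (x + y))
    (hnontriv : ∃ x : k, x ≠ 0 ∧ v x ≠ 0)
    (hbdd : ∃ B : ℝ, ∀ n : ℤ, (B : WithTop ℝ) ≤ v (n : k)) :
    ∃! 𝔭 : HeightOneSpectrum (𝓞 k), ∃ s : ℝ, 0 < s ∧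
      ∀ (x : k) (m : ℤ), x ≠ 0 →
        𝔭.valuation k x = ((Multiplicative.ofAdd (-m) : Multiplicative ℤ) : WithZero (Multiplicative ℤ)) →
        v x = ((s * m : ℝ) : WithTop ℝ) :=
  stmt_12_general k v h0 hmul hadd hnontriv
end

section
/- Every archimedean absolute value on ℚ is a positive real power of the usual absolute value. -/
open Rat.AbsoluteValue

theorem stmt_14 (φ : AbsoluteValue ℚ ℝ)
    (hunbdd : ¬ ∃ B : ℝ, ∀ n : ℤ, φ (n : ℚ) ≤ B) :
    ∃ α : ℝ, 0 < α ∧ ∀ x : ℚ, φ x = |x| ^ α := by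
  have notbdd : ¬ ∀ n : ℕ, φ n ≤ 1 := fun h ↦
    hunbdd ⟨1, fun n ↦ by rw [← AbsoluteValue.apply_natAbs_eq]; exact h n.natAbs⟩
  obtain ⟨α, hα, hφ⟩ :=
    AbsoluteValue.isEquiv_iff_exists_rpow_eq.mp (equiv_real_of_unbounded notbdd).symm
  exact ⟨α, hα, fun x ↦ by rw [← congrFun hφ x, real_eq_abs]⟩
end
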